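/- arXiv:math/0003065 — 6 statements merged into one kernel-verified Lean document; each statement's English description precedes it below -/
import Mathlib

section
/- In the category of types, reflexive coequalizers commute with binary products: given reflexive pairs f, g : X ⇉ Y (with common section s : Y → X satisfying f ∘ s = id and g ∘ s = id) and f', g' : X' ⇉ Y', the canonical map from the coequalizer of the pair (f × f', g × g') : X × X' ⇉ Y × Y' to the product (coeq(f,g)) × (coeq(f',g')) of the coequalizers is a bijection. -/
open CategoryTheory CategoryTheory.Limits

universe u

/-!
Write `[y, y']` for the class of `(y, y')` in the coequalizer of `(f × f', g × g')`. Surjectivity of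
the comparison map is clear. For injectivity it suffices to change one coordinate at a time: for
fixed `y'`, the map `y ↦ [y, y']` coequalizes `f` and `g`, since `(f x, y') = (f x, f' (s' y'))` and
`(g x, y') = (g x, g' (s' y'))` are identified by `(x, s' y')`. Hence it factors through the
coequalizer of `f` and `g`, and `[y₁, y'] = [y₂, y']` whenever `y₁` and `y₂` have the same class.
-/

namespace CategoryTheory.Limits.Types

variable {X Y X' Y' Z : Type u} {f g : X ⟶ Y} {f' g' : X' ⟶ Y'}

lemma coequalizer_π_surjective (f g : X ⟶ Y) : Function.Surjective (coequalizer.π f g) :=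
  (epi_iff_surjective _).mp inferInstance

lemma apply_eq_of_coequalizer_π_eq (k : Y ⟶ Z) (hk : f ≫ k = g ≫ k) {y₁ y₂ : Y}
    (h : coequalizer.π f g y₁ = coequalizer.π f g y₂) : k y₁ = k y₂ := by
  rw [← coequalizer.π_desc k hk, types_comp_apply, types_comp_apply, h]

variable (k : Y × Y' ⟶ Z) (hk : ↾(Prod.map f f') ≫ k = ↾(Prod.map g g') ≫ k)
include hk

lemma prodMap_condition_fst [IsReflexivePair f' g'] (y' : Y') :
    f ≫ ↾(fun y ↦ k (y, y')) = g ≫ ↾(fun y ↦ k (y, y')) := by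
  have hf' : f' (commonSection f' g' y') = y' := types_congr_hom (section_comp_left f' g') y'
  have hg' : g' (commonSection f' g' y') = y' := types_congr_hom (section_comp_right f' g') y'
  ext x
  simpa [hf', hg'] using types_congr_hom hk (x, commonSection f' g' y')

lemma prodMap_condition_snd [IsReflexivePair f g] (y : Y) :
    f' ≫ ↾(fun y' ↦ k (y, y')) = g' ≫ ↾(fun y' ↦ k (y, y')) := by
  have hf : f (commonSection f g y) = y := types_congr_hom (section_comp_left f g) y
  have hg : g (commonSection f g y) = y := types_congr_hom (section_comp_right f g) y
  ext x'
  simpa [hf, hg] using types_congr_hom hk (commonSection f g y, x')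

lemma apply_prod_eq_of_coequalizer_π_eq [IsReflexivePair f g] [IsReflexivePair f' g']
    {y₁ y₂ : Y} {y₁' y₂' : Y'} (h : coequalizer.π f g y₁ = coequalizer.π f g y₂)
    (h' : coequalizer.π f' g' y₁' = coequalizer.π f' g' y₂') :
    k (y₁, y₁') = k (y₂, y₂') :=
  calc k (y₁, y₁') = k (y₂, y₁') :=
        apply_eq_of_coequalizer_π_eq _ (prodMap_condition_fst k hk y₁') h
    _ = k (y₂, y₂') := apply_eq_of_coequalizer_π_eq _ (prodMap_condition_snd k hk y₂) h'

end CategoryTheory.Limits.Types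

/-- In the category of types, reflexive coequalizers commute with binary products:
given reflexive pairs `f, g : X ⇉ Y` (with common section `s`) and `f', g' : X' ⇉ Y'`
(with common section `s'`), the canonical map from the coequalizer of the pair
`(f × f', g × g') : X × X' ⇉ Y × Y'` to the product of the coequalizers is a bijection. -/
theorem reflexive_coequalizers_commute_with_binary_products
    {X Y X' Y' : Type u} (f g : X ⟶ Y) (s : Y ⟶ X)
    (hfs : s ≫ f = 𝟙 Y) (hgs : s ≫ g = 𝟙 Y)
    (f' g' : X' ⟶ Y') (s' : Y' ⟶ X')
    (hfs' : s' ≫ f' = 𝟙 Y') (hgs' : s' ≫ g' = 𝟙 Y')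
    (q : (Y × Y' : Type u) ⟶ (coequalizer f g × coequalizer f' g' : Type u))
    (hq : q = fun p : Y × Y' => (coequalizer.π f g p.1, coequalizer.π f' g' p.2))
    (w : (TypeCat.ofHom (Prod.map f f') : X × X' ⟶ Y × Y') ≫ q = (TypeCat.ofHom (Prod.map g g') : X × X' ⟶ Y × Y') ≫ q) :
    Function.Bijective
      (α := coequalizer (TypeCat.ofHom (Prod.map f f') : X × X' ⟶ Y × Y') (TypeCat.ofHom (Prod.map g g')))
      (β := coequalizer f g × coequalizer f' g')
      (coequalizer.desc q w) := by
  have := IsReflexivePair.mk' s hfs hgs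
  have := IsReflexivePair.mk' s' hfs' hgs'
  have desc_π (y : Y) (y' : Y') :
      coequalizer.desc q w (coequalizer.π (↾(Prod.map f f')) (↾(Prod.map g g')) (y, y')) =
        (coequalizer.π f g y, coequalizer.π f' g' y') :=
    (types_congr_hom (coequalizer.π_desc q w) (y, y')).trans (congrFun hq (y, y'))
  refine ⟨fun c₁ c₂ h ↦ ?_, fun ⟨c, c'⟩ ↦ ?_⟩
  · obtain ⟨⟨y₁, y₁'⟩, rfl⟩ := Types.coequalizer_π_surjective _ _ c₁
    obtain ⟨⟨y₂, y₂'⟩, rfl⟩ := Types.coequalizer_π_surjective _ _ c₂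
    rw [desc_π, desc_π, Prod.mk.injEq] at h
    exact Types.apply_prod_eq_of_coequalizer_π_eq _ (coequalizer.condition _ _) h.1 h.2
  · obtain ⟨y, rfl⟩ := Types.coequalizer_π_surjective f g c
    obtain ⟨y', rfl⟩ := Types.coequalizer_π_surjective f' g' c'
    exact ⟨_, desc_π y y'⟩
end

section
/- Let F : Type u ⥤ Type u be a functor that preserves filtered colimits. Then F is a pointwise left Kan extension of its restriction to finite types along the inclusion of finite types: the canonical comparison map from the left Kan extension of (FintypeCat.incl ⋙ F) along FintypeCat.incl to F is a natural isomorphism. -/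
/-!
A type `X` is the directed union of its finite subsets, and `Finset X` is final in the category
of finite types over `X` (a map from a finite type factors through its image, and uniquely, since
the inclusion of a subset is injective). Hence `X` is the canonical colimit of the finite types
over it, and this colimit is filtered with a small final subdiagram, so `F` preserves it; the
image cocone is exactly the cocone exhibiting `F` as a pointwise left Kan extension at `X`.
-/

open CategoryTheory CategoryTheory.Limits

universe u

namespace FintypeCat

section

variable (X : Type u) [DecidableEq X]

def finsetToCostructuredArrow : Finset X ⥤ CostructuredArrow FintypeCat.incl X where
  obj S := CostructuredArrow.mk (Y := FintypeCat.of S) (TypeCat.ofHom Subtype.val)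
  map h := CostructuredArrow.homMk (FintypeCat.homMk fun a => ⟨a.1, h.le a.2⟩) rfl

variable {X}

instance (d : CostructuredArrow FintypeCat.incl X) (S : Finset X) :
    Subsingleton (d ⟶ (finsetToCostructuredArrow X).obj S) where
  allEq s s' := by
    ext a
    apply Subtype.ext
    exact (ConcreteCategory.congr_hom (CostructuredArrow.w s) a).trans
      (ConcreteCategory.congr_hom (CostructuredArrow.w s') a).symm

instance : (finsetToCostructuredArrow X).Final := by
  refine Functor.final_of_exists_of_isFiltered _ (fun d => ?_)
    (fun {_ S} _ _ => ⟨S, 𝟙 S, Subsingleton.elim _ _⟩)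
  have hd := Set.finite_range (ι := d.left) d.hom
  exact ⟨hd.toFinset, ⟨CostructuredArrow.homMk
    (FintypeCat.homMk fun a => ⟨d.hom a, hd.mem_toFinset.2 ⟨a, rfl⟩⟩) rfl⟩⟩

end

noncomputable def inclDenseAt (X : Type u) : FintypeCat.incl.DenseAt X := by
  classical
  refine (Functor.Final.isColimitWhiskerEquiv (finsetToCostructuredArrow X) _)
    (Types.FilteredColimit.isColimitOf _ _
      (fun x => ⟨{x}, ⟨x, Finset.mem_singleton_self x⟩, rfl⟩) ?_)
  intro S T _ _ h
  exact ⟨S ∪ T, homOfLE Finset.subset_union_left, homOfLE Finset.subset_union_right,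
    Subtype.ext h⟩

/- `CostructuredArrow FintypeCat.incl X` is not small, so `PreservesFilteredColimits` does not
apply to it directly. -/
instance {D : Type*} [Category.{u} D] (F : Type u ⥤ D) [PreservesFilteredColimits F]
    (X : Type u) : PreservesColimitsOfShape (CostructuredArrow FintypeCat.incl X) F := by
  classical
  exact Functor.Final.preservesColimitsOfShape_of_final (finsetToCostructuredArrow X) F

end FintypeCat

/-- A filtered-colimit-preserving endofunctor `F` of `Type u` is a pointwise left Kan
extension of its restriction to finite types along the inclusion
`FintypeCat.incl : FintypeCat ⥤ Type u`; that is, the left extension of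
`FintypeCat.incl ⋙ F` given by `F` itself (with the identity natural transformation
as unit) is a pointwise left Kan extension.  In particular the canonical comparison
map from the left Kan extension of `FintypeCat.incl ⋙ F` along `FintypeCat.incl`
to `F` is a natural isomorphism. -/
theorem isPointwiseLeftKanExtension_of_preservesFilteredColimits
    (F : Type u ⥤ Type u) [PreservesFilteredColimits F] :
    Nonempty ((Functor.LeftExtension.mk F
      (𝟙 (FintypeCat.incl ⋙ F))).IsPointwiseLeftKanExtension) :=
  ⟨fun X => (isColimitOfPreserves F (FintypeCat.inclDenseAt X)).ofIsoColimit
    (Cocone.ext (Iso.refl _))⟩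
end

section
/- Let I be a set, let T be a monad on the category of I-graded sets whose underlying endofunctor preserves filtered colimits and reflexive coequalizers, and let X be a T-algebra. Then the composite functor from the under-category of objects under X in T-algebras to I-graded sets (first forgetting the map from X, then taking the underlying graded set) is a monadic right adjoint, and the underlying endofunctor of the associated monad (which sends a graded set K to the underlying graded set of the coproduct, in T-algebras, of the free T-algebra on K with X) preserves filtered colimits. -/
/-! The projection `Under X ⥤ T.Algebra` creates connected colimits, and `T.forget` creates the
reflexive coequalizers and filtered colimits that `T` preserves. Hence the composite
`Under X ⥤ Discrete I ⥤ Type u` reflects isomorphisms, has the left adjoint `K ↦ T.free K ⨿ X`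
(so every left adjoint is of this form), and its domain has and it preserves reflexive
coequalizers, so the crude monadicity theorem applies. Filtered categories are connected, so the
composite also preserves filtered colimits, and so does the induced monad, which is the composite
precomposed with a left adjoint. -/

open CategoryTheory CategoryTheory.Limits

universe u

namespace CategoryTheory

variable {C D E : Type*} [Category C] [Category D] [Category E]

instance IsReflexivePair.map (F : C ⥤ D) {A B : C} (f g : A ⟶ B) [IsReflexivePair f g] :
    IsReflexivePair (F.map f) (F.map g) :=
  IsReflexivePair.mk' (F.map (commonSection f g))
    (by rw [← F.map_comp, section_comp_left, F.map_id])
    (by rw [← F.map_comp, section_comp_right, F.map_id])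

def parallelPairCompIso (F : C ⥤ D) {A B : C} (f g : A ⟶ B) :
    parallelPair f g ⋙ F ≅ parallelPair (F.map f) (F.map g) :=
  diagramIsoParallelPair _

theorem preservesColimit_parallelPair_comp (F : C ⥤ D) (G : D ⥤ E) {A B : C} (f g : A ⟶ B)
    [PreservesColimit (parallelPair (F.map f) (F.map g)) G] :
    PreservesColimit (parallelPair f g ⋙ F) G :=
  preservesColimit_of_iso_diagram G (parallelPairCompIso F f g).symm

instance Monad.PreservesColimitOfIsReflexivePair.comp (F : C ⥤ D) (G : D ⥤ E)
    [Monad.PreservesColimitOfIsReflexivePair F] [Monad.PreservesColimitOfIsReflexivePair G] :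
    Monad.PreservesColimitOfIsReflexivePair (F ⋙ G) where
  out _ _ f g _ :=
    have := preservesColimit_parallelPair_comp F G f g
    inferInstance

section CreatesReflexiveCoequalizers

variable (F : C ⥤ D) [HasReflexiveCoequalizers D]

theorem hasReflexiveCoequalizers_of_createsColimit
    (hF : ∀ ⦃A B : C⦄ (f g : A ⟶ B) [IsReflexivePair f g], CreatesColimit (parallelPair f g) F) :
    HasReflexiveCoequalizers C where
  has_coeq _ _ f g _ :=
    have := hF f g
    have := hasColimit_of_iso (parallelPairCompIso F f g)
    hasColimit_of_created _ F

theorem preservesColimitOfIsReflexivePair_of_createsColimit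
    (hF : ∀ ⦃A B : C⦄ (f g : A ⟶ B) [IsReflexivePair f g], CreatesColimit (parallelPair f g) F) :
    Monad.PreservesColimitOfIsReflexivePair F where
  out _ _ f g _ :=
    have := hF f g
    have := hasColimit_of_iso (parallelPairCompIso F f g)
    preservesColimit_of_createsColimit_and_hasColimit _ F

end CreatesReflexiveCoequalizers

namespace Under

variable {B : C}

instance hasReflexiveCoequalizers [HasReflexiveCoequalizers C] :
    HasReflexiveCoequalizers (Under B) :=
  hasReflexiveCoequalizers_of_createsColimit (Under.forget B) fun _ _ _ _ _ => inferInstance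

instance preservesColimitOfIsReflexivePair_forget [HasReflexiveCoequalizers C] :
    Monad.PreservesColimitOfIsReflexivePair (Under.forget B) :=
  preservesColimitOfIsReflexivePair_of_createsColimit (Under.forget B)
    fun _ _ _ _ _ => inferInstance

instance preservesFilteredColimits_forget : PreservesFilteredColimitsOfSize (Under.forget B) where
  preserves_filtered_colimits J _ _ :=
    have := IsFiltered.isConnected J
    inferInstance

end Under

namespace Monad

variable {T : Monad C} [PreservesColimitOfIsReflexivePair T.toFunctor]

noncomputable instance forgetCreatesReflexiveCoequalizer {A B : T.Algebra} (f g : A ⟶ B)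
    [IsReflexivePair f g] :
    CreatesColimit (parallelPair f g) T.forget :=
  have := preservesColimit_parallelPair_comp T.forget T.toFunctor f g
  have : PreservesColimit ((parallelPair f g ⋙ T.forget) ⋙ T.toFunctor) T.toFunctor :=
    preservesColimit_parallelPair_comp (T.forget ⋙ T.toFunctor) T.toFunctor f g
  forgetCreatesColimit _

variable [HasReflexiveCoequalizers C]

instance hasReflexiveCoequalizers_algebra : HasReflexiveCoequalizers T.Algebra :=
  hasReflexiveCoequalizers_of_createsColimit T.forget fun _ _ _ _ _ => inferInstance

instance preservesColimitOfIsReflexivePair_forget : PreservesColimitOfIsReflexivePair T.forget :=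
  preservesColimitOfIsReflexivePair_of_createsColimit T.forget
    fun _ _ _ _ _ => inferInstance

end Monad

instance Monad.preservesFilteredColimits_forget {T : Monad C} [HasFilteredColimits C]
    [PreservesFilteredColimits T.toFunctor] : PreservesFilteredColimits T.forget where
  preserves_filtered_colimits _ _ _ := inferInstance

end CategoryTheory

/-- Let `T` be a monad on the category of `I`-graded sets whose underlying endofunctor
preserves filtered colimits and reflexive coequalizers, and let `X` be a `T`-algebra.
Then the composite functor `Under X ⥤ (Discrete I ⥤ Type u)` (forget the map from `X`,
then take the underlying graded set) is a monadic right adjoint, and for any adjunction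
`L ⊣ (Under.forget X ⋙ Monad.forget T)` the underlying endofunctor of the induced monad
preserves filtered colimits; its value at a graded set `K` is (isomorphic to) the
underlying graded set of the coproduct, in `T`-algebras, of the free `T`-algebra on `K`
with `X`.  (The binary-coproduct hypothesis holds automatically: the category of
`T`-algebras is cocomplete under the stated hypotheses on `T`.) -/
theorem under_category_monadic_over_graded_sets
    (I : Type u) (T : Monad (Discrete I ⥤ Type u))
    [PreservesFilteredColimits T.toFunctor]
    (hT : ∀ {X Y : Discrete I ⥤ Type u} (f g : X ⟶ Y) (s : Y ⟶ X),
      s ≫ f = 𝟙 Y → s ≫ g = 𝟙 Y → PreservesColimit (parallelPair f g) T.toFunctor)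
    [HasBinaryCoproducts (Monad.Algebra T)]
    (X : Monad.Algebra T) :
    Nonempty (MonadicRightAdjoint (Under.forget X ⋙ Monad.forget T)) ∧
    ∀ (L : (Discrete I ⥤ Type u) ⥤ Under X)
      (adj : L ⊣ Under.forget X ⋙ Monad.forget T),
      PreservesFilteredColimits (adj.toMonad).toFunctor ∧
      ∀ K : Discrete I ⥤ Type u,
        Nonempty ((adj.toMonad).toFunctor.obj K ≅
          (Monad.forget T).obj ((T.free.obj K) ⨿ X)) := by
  have : Monad.PreservesColimitOfIsReflexivePair T.toFunctor :=
    ⟨fun _ _ f g _ => hT f g _ (section_comp_left f g) (section_comp_right f g)⟩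
  let adj₀ := T.adj.comp (Under.costarAdjForget X)
  refine ⟨⟨Monad.monadicOfHasPreservesReflexiveCoequalizersOfReflectsIsomorphisms adj₀⟩,
    fun L adj => ⟨?_, fun K => ⟨?_⟩⟩⟩
  · have := adj.leftAdjoint_preservesColimits
    exact inferInstanceAs (PreservesFilteredColimits (L ⋙ Under.forget X ⋙ T.forget))
  · exact (Under.forget X ⋙ T.forget).mapIso ((adj.leftAdjointUniq adj₀).app K) ≪≫
      T.forget.mapIso (coprod.braiding _ _)
end

section
/- Let M be a model category, let f : X ⟶ Y be a weak equivalence between cofibrant objects, and let i : X ⟶ X' be a cofibration. Then the pushout of f along i, namely the induced map X' ⟶ X' ⊔_X Y from X' to the pushout of i and f, is a weak equivalence. -/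
open CategoryTheory CategoryTheory.Limits

universe v u

/-- A (closed) model category structure in Quillen's sense: a complete and cocomplete
category together with three classes of morphisms (weak equivalences, fibrations,
cofibrations) satisfying two-out-of-three, closure under retracts, the lifting axioms
and the factorization axioms.  (Completeness and cocompleteness are imposed as
hypotheses where this structure is used.) -/
structure ModelStructure (C : Type u) [Category.{v} C] where
  weq : MorphismProperty C
  fib : MorphismProperty C
  cof : MorphismProperty C
  weq_comp : ∀ {X Y Z : C} (f : X ⟶ Y) (g : Y ⟶ Z), weq f → weq g → weq (f ≫ g)
  weq_cancel_left : ∀ {X Y Z : C} (f : X ⟶ Y) (g : Y ⟶ Z), weq f → weq (f ≫ g) → weq g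
  weq_cancel_right : ∀ {X Y Z : C} (f : X ⟶ Y) (g : Y ⟶ Z), weq g → weq (f ≫ g) → weq f
  weq_retract : ∀ {f g : Arrow C} (i : f ⟶ g) (r : g ⟶ f), i ≫ r = 𝟙 f →
    weq g.hom → weq f.hom
  fib_retract : ∀ {f g : Arrow C} (i : f ⟶ g) (r : g ⟶ f), i ≫ r = 𝟙 f →
    fib g.hom → fib f.hom
  cof_retract : ∀ {f g : Arrow C} (i : f ⟶ g) (r : g ⟶ f), i ≫ r = 𝟙 f →
    cof g.hom → cof f.hom
  lift_of_trivCof : ∀ {A B X Y : C} (i : A ⟶ B) (p : X ⟶ Y),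
    cof i → weq i → fib p → HasLiftingProperty i p
  lift_of_trivFib : ∀ {A B X Y : C} (i : A ⟶ B) (p : X ⟶ Y),
    cof i → fib p → weq p → HasLiftingProperty i p
  factor_cof_trivFib : ∀ {X Y : C} (f : X ⟶ Y),
    ∃ (Z : C) (i : X ⟶ Z) (p : Z ⟶ Y), cof i ∧ fib p ∧ weq p ∧ i ≫ p = f
  factor_trivCof_fib : ∀ {X Y : C} (f : X ⟶ Y),
    ∃ (Z : C) (i : X ⟶ Z) (p : Z ⟶ Y), cof i ∧ weq i ∧ fib p ∧ i ≫ p = f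

/-!
Ken Brown's factorization writes `f` as a trivial cofibration `X ⟶ Z` followed by a trivial
fibration `q : Z ⟶ Y` with a section `s`; the pushout of the trivial cofibration is again one,
so it remains to see that the cobase change `r : W ⟶ P` of `q` along the cofibration
`k : Z ⟶ W` is a weak equivalence. Lifting against `q` gives a homotopy from `𝟙 Z` to `q ≫ s`
over `Y`. Factor `r = c ≫ p` with `c` a trivial cofibration and `p` a fibration; the homotopy
extension property along `k` deforms `c` into a weak equivalence `u : W ⟶ E` over `P` that
restricts to `q ≫ s ≫ k ≫ c` on `Z`. Then `u` and `s ≫ k ≫ c` glue to a section `ℓ` of `p`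
with `r ≫ ℓ = u`; since `c ≫ p ≫ ℓ = u`, the map `p ≫ ℓ` is a weak equivalence, and `ℓ` is a
retract of it, so `ℓ` and hence `r` are weak equivalences.
-/

namespace HomotopicalAlgebra

open MorphismProperty

variable {C : Type u} [Category.{v} C]

lemma weakEquivalence_of_comp_eq_id [CategoryWithWeakEquivalences C]
    [(weakEquivalences C).IsStableUnderRetracts] {E P : C} {ℓ : P ⟶ E} {p : E ⟶ P}
    (hℓ : ℓ ≫ p = 𝟙 P) [WeakEquivalence (p ≫ ℓ)] : WeakEquivalence ℓ := by
  have h : RetractArrow ℓ (p ≫ ℓ) :=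
    { i := Arrow.homMk ℓ (𝟙 E) (by simp [reassoc_of% hℓ])
      r := Arrow.homMk p (𝟙 E)
      retract := by ext <;> simp [hℓ] }
  rw [weakEquivalence_iff] at *
  exact (weakEquivalences C).of_retract h ‹_›

variable [ModelCategory C]

lemma Cylinder.exists_leftHomotopy_of_comp_eq {A Z Y : C} (P : Cylinder A) [P.IsGood]
    (q : Z ⟶ Y) [Fibration q] [WeakEquivalence q] {a b : A ⟶ Z} (hab : a ≫ q = b ≫ q) :
    ∃ h : P.LeftHomotopy a b, h.h ≫ q = P.π ≫ a ≫ q := by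
  have sq : CommSq (coprod.desc a b) P.i q (P.π ≫ a ≫ q) :=
    ⟨by ext <;> simp [← hab, coprod.inl_desc, coprod.inr_desc]⟩
  refine ⟨{ h := sq.lift, h₀ := ?_, h₁ := ?_ }, sq.fac_right⟩
  · rw [← P.inl_i, Category.assoc, sq.fac_left, coprod.inl_desc]
  · rw [← P.inr_i, Category.assoc, sq.fac_left, coprod.inr_desc]

/-- The cylinder `Q` is obtained by factoring the map `P.I ⊔_Z W ⟶ W` as a cofibration
followed by a trivial fibration; the homotopy on `Q` is a lift against `p` of the trivial
cofibration `P.I ⊔_Z W ⟶ Q.I`. -/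
lemma Cylinder.exists_leftHomotopy_extension {Z W E B : C} [IsCofibrant Z]
    (k : Z ⟶ W) [Cofibration k] {P : Cylinder Z} [P.IsGood] (p : E ⟶ B) [Fibration p]
    (a : W ⟶ E) {b : Z ⟶ E} (h : P.LeftHomotopy (k ≫ a) b)
    (hp : h.h ≫ p = P.π ≫ k ≫ a ≫ p) :
    ∃ (Q : Cylinder W) (a' : W ⟶ E) (h' : Q.LeftHomotopy a a'),
      k ≫ a' = b ∧ h'.h ≫ p = Q.π ≫ a ≫ p := by
  have sqN := IsPushout.of_hasPushout P.i₀ k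
  let θ := sqN.desc (P.π ≫ k) (𝟙 W) (by simp)
  have : WeakEquivalence θ := weakEquivalence_of_precomp_of_fac (sqN.inr_desc _ _ _)
  let d := factorizationData (cofibrations C) (trivialFibrations C) θ
  have : WeakEquivalence d.i := weakEquivalence_of_postcomp_of_fac d.fac
  have sq₁ : CommSq (P.i₁ ≫ pushout.inl P.i₀ k ≫ d.i) k d.p (𝟙 W) := ⟨by simp [θ]⟩
  let Q : Cylinder W :=
    { I := d.Z
      i₀ := pushout.inr P.i₀ k ≫ d.i
      i₁ := sq₁.lift
      π := d.p
      i₀_π := by simp [θ] }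
  have sq₂ : CommSq (sqN.desc h.h a h.h₀) d.i p (d.p ≫ a ≫ p) :=
    ⟨sqN.hom_ext (by simp [θ, hp]) (by simp [θ])⟩
  exact ⟨Q, Q.i₁ ≫ sq₂.lift, { h := sq₂.lift, h₀ := by simp [Q] }, by simp [Q], sq₂.fac_right⟩

lemma weakEquivalence_of_isPushout_of_trivialFibration {Z Y W P : C} [IsCofibrant Z]
    {q : Z ⟶ Y} [Fibration q] [WeakEquivalence q] {s : Y ⟶ Z} (hs : s ≫ q = 𝟙 Y)
    {k : Z ⟶ W} [Cofibration k] {r : W ⟶ P} {g : Y ⟶ P} (sq : IsPushout k q r g) :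
    WeakEquivalence r := by
  let d := factorizationData (trivialCofibrations C) (fibrations C) r
  obtain ⟨cyl, _⟩ := Cylinder.exists_very_good Z
  obtain ⟨H, hH⟩ := cyl.exists_leftHomotopy_of_comp_eq q (a := 𝟙 Z) (b := q ≫ s) (by simp [hs])
  let K : cyl.LeftHomotopy (k ≫ d.i) (q ≫ s ≫ k ≫ d.i) := { h := H.h ≫ k ≫ d.i }
  obtain ⟨Q, u, L, hku, hL⟩ := Cylinder.exists_leftHomotopy_extension k d.p d.i K (by
    simp [K, sq.w, reassoc_of% hH])
  have : WeakEquivalence u := L.weakEquivalence_iff.1 inferInstance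
  have hu : u ≫ d.p = r := by simpa using Q.i₁ ≫= hL
  let ℓ := sq.desc u (s ≫ k ≫ d.i) hku
  have hℓ : ℓ ≫ d.p = 𝟙 P := sq.hom_ext (by simp [ℓ, hu]) (by simp [ℓ, sq.w, reassoc_of% hs])
  have : WeakEquivalence (d.p ≫ ℓ) :=
    weakEquivalence_of_precomp_of_fac (f := d.i) (fg := u) (by simp [ℓ])
  have : WeakEquivalence ℓ := weakEquivalence_of_comp_eq_id hℓ
  exact weakEquivalence_of_postcomp_of_fac (g := ℓ) (sq.inl_desc _ _ _)

theorem weakEquivalence_of_isPushout_of_isCofibrant {X Y X' P : C} [IsCofibrant X]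
    [IsCofibrant Y] {f : X ⟶ Y} [WeakEquivalence f] {i : X ⟶ X'} [Cofibration i]
    {j : X' ⟶ P} {g : Y ⟶ P} (sq : IsPushout i f j g) : WeakEquivalence j := by
  obtain ⟨h⟩ : Nonempty (CofibrantBrownFactorization f) := inferInstance
  have : IsCofibrant h.Z := isCofibrant_of_cofibration h.i
  rw [← h.fac] at sq
  have sqW := IsPushout.of_hasPushout i h.i
  have := weakEquivalence_of_isPushout_of_trivialFibration h.s_p (sq.of_top' sqW)
  rw [← sqW.inl_desc j (h.p ≫ g) (by rw [sq.w, Category.assoc])]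
  infer_instance

end HomotopicalAlgebra

open HomotopicalAlgebra in
abbrev ModelStructure.toModelCategory {C : Type u} [Category.{v} C] [HasLimits C]
    [HasColimits C] (M : ModelStructure C) : ModelCategory C where
  categoryWithWeakEquivalences := ⟨M.weq⟩
  categoryWithFibrations := ⟨M.fib⟩
  categoryWithCofibrations := ⟨M.cof⟩
  cm2 :=
    { comp_mem := M.weq_comp
      of_postcomp := M.weq_cancel_right
      of_precomp := M.weq_cancel_left }
  cm3a := ⟨fun h => M.weq_retract h.i h.r h.retract⟩
  cm3b := ⟨fun h => M.fib_retract h.i h.r h.retract⟩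
  cm3c := ⟨fun h => M.cof_retract h.i h.r h.retract⟩
  cm4a i p hi hi' hp := M.lift_of_trivCof i p hi.1 hi'.1 hp.1
  cm4b i p hi hp hp' := M.lift_of_trivFib i p hi.1 hp.1 hp'.1
  cm5a := ⟨fun f => by
    obtain ⟨Z, i, p, hi, hi', hp, fac⟩ := M.factor_trivCof_fib f
    exact ⟨{ Z, i, p, fac, hi := ⟨hi, hi'⟩, hp }⟩⟩
  cm5b := ⟨fun f => by
    obtain ⟨Z, i, p, hi, hp, hp', fac⟩ := M.factor_cof_trivFib f
    exact ⟨{ Z, i, p, fac, hi, hp := ⟨hp, hp'⟩ }⟩⟩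

/-- In a model category, the pushout of a weak equivalence between cofibrant objects
along a cofibration is a weak equivalence. -/
theorem pushout_of_weq_between_cofibrant_along_cofibration
    {C : Type u} [Category.{v} C] [HasLimits C] [HasColimits C]
    (M : ModelStructure C) {X Y X' P : C}
    (f : X ⟶ Y) (hf : M.weq f)
    (hX : M.cof (initial.to X)) (hY : M.cof (initial.to Y))
    (i : X ⟶ X') (hi : M.cof i)
    (j : X' ⟶ P) (g : Y ⟶ P) (sq : IsPushout i f j g) :
    M.weq j := by
  let := M.toModelCategory
  have : HomotopicalAlgebra.WeakEquivalence f := ⟨hf⟩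
  have : HomotopicalAlgebra.IsCofibrant X := ⟨hX⟩
  have : HomotopicalAlgebra.IsCofibrant Y := ⟨hY⟩
  have : HomotopicalAlgebra.Cofibration i := ⟨hi⟩
  exact (HomotopicalAlgebra.weakEquivalence_of_isPushout_of_isCofibrant sq).mem
end

section
/- Let M be a model category in which every object is cofibrant. Then M is left proper: for every pushout square with sides i : A ⟶ B, f : A ⟶ C, g : B ⟶ D, (C ⟶ D), if i is a cofibration and f is a weak equivalence, then g is a weak equivalence. -/
/-!
Reedy's argument. By Brown's factorization lemma (`A` and `D` are cofibrant),
`f = K.i ≫ K.p` with `K.i` a trivial cofibration and `K.p` a trivial fibration having a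
trivial-cofibration section `K.s`. Lifting against `K.p` gives a homotopy `H : P.I ⟶ K.Z`
from `K.i` to `f ≫ K.s` over `D`, on a good cylinder `P` of `A`; factoring
`B ⊔_A P.I ⊔_A B ⟶ B` gives a relative cylinder `B'` for `i`. The span `B' ← P.I → K.Z`
receives maps from the spans `B ← A → A` and `B ← A → D` that are Reedy trivial
cofibrations, so they induce weak equivalences `B ⟶ Q` and `E ⟶ Q` on pushouts. It also
maps back to `B ← A → D`, and `E ⟶ Q ⟶ E` is the identity; hence `Q ⟶ E` and
`g = (B ⟶ Q ⟶ E)` are weak equivalences.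
-/

open CategoryTheory CategoryTheory.Limits

universe v u

namespace ModelStructure

open HomotopicalAlgebra

variable {C : Type u} [Category.{v} C]

abbrev toModelCategory_s16 (M : ModelStructure C) [HasFiniteLimits C] [HasFiniteColimits C] :
    ModelCategory C where
  categoryWithFibrations := ⟨M.fib⟩
  categoryWithCofibrations := ⟨M.cof⟩
  categoryWithWeakEquivalences := ⟨M.weq⟩
  cm2 :=
    { comp_mem := M.weq_comp
      of_postcomp := M.weq_cancel_right
      of_precomp := M.weq_cancel_left }
  cm3a := ⟨fun h => M.weq_retract h.i h.r h.retract⟩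
  cm3b := ⟨fun h => M.fib_retract h.i h.r h.retract⟩
  cm3c := ⟨fun h => M.cof_retract h.i h.r h.retract⟩
  cm4a i p hi hi' hp := M.lift_of_trivCof i p hi.mem hi'.mem hp.mem
  cm4b i p hi hp hp' := M.lift_of_trivFib i p hi.mem hp.mem hp'.mem
  cm5a := ⟨fun f => by
    obtain ⟨Z, i, p, hi, hi', hp, fac⟩ := M.factor_trivCof_fib f
    exact ⟨{ Z, i, p, fac, hi := ⟨hi, hi'⟩, hp }⟩⟩
  cm5b := ⟨fun f => by
    obtain ⟨Z, i, p, hi, hp, hp', fac⟩ := M.factor_cof_trivFib f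
    exact ⟨{ Z, i, p, fac, hi, hp := ⟨hp, hp'⟩ }⟩⟩

end ModelStructure

namespace HomotopicalAlgebra

open Category MorphismProperty

variable {C : Type u} [Category.{v} C] [ModelCategory C]

/-- The pushout functor on spans `B ← A → X` sends Reedy trivial cofibrations (maps of spans
that are trivial cofibrations on the right leg `c` and on the latching map `B ⊔_A A' ⟶ B'`)
to trivial cofibrations. -/
theorem trivialCofibrations_of_isPushout_map {A B X A' B' X' P P' : C}
    {i : A ⟶ B} {x : A ⟶ X} {inl : B ⟶ P} {inr : X ⟶ P} (sq : IsPushout i x inl inr)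
    {i' : A' ⟶ B'} {x' : A' ⟶ X'} {inl' : B' ⟶ P'} {inr' : X' ⟶ P'}
    (sq' : IsPushout i' x' inl' inr') (a : A ⟶ A') (b : B ⟶ B') (c : X ⟶ X')
    (hb : i ≫ b = a ≫ i') (hc : x ≫ c = a ≫ x')
    (hlatch : trivialCofibrations C (pushout.desc b i' hb)) (hc' : trivialCofibrations C c)
    (m : P ⟶ P') (hm₁ : inl ≫ m = b ≫ inl') (hm₂ : inr ≫ m = c ≫ inr') :
    trivialCofibrations C m := by
  rw [← fibrations_llp] at hlatch hc' ⊢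
  intro Y₁ Y₂ q hq
  have := hlatch q hq
  have := hc' q hq
  refine ⟨fun {t s} hts => ?_⟩
  have sqX : CommSq (inr ≫ t) c q (inr' ≫ s) := ⟨by rw [assoc, hts.w, reassoc_of% hm₂]⟩
  have sqB : CommSq (pushout.desc (inl ≫ t) (x' ≫ sqX.lift)
      (by rw [reassoc_of% sq.w, ← reassoc_of% hc, sqX.fac_left]))
      (pushout.desc b i' hb) q (inl' ≫ s) := ⟨by
    apply pushout.hom_ext
    · rw [pushout.inl_desc_assoc, pushout.inl_desc_assoc, assoc, hts.w, reassoc_of% hm₁]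
    · rw [pushout.inr_desc_assoc, pushout.inr_desc_assoc, assoc, sqX.fac_right, sq'.w_assoc]⟩
  have hbB : b ≫ sqB.lift = inl ≫ t := by
    simpa only [pushout.inl_desc_assoc, pushout.inl_desc] using pushout.inl _ _ ≫= sqB.fac_left
  have hiB : i' ≫ sqB.lift = x' ≫ sqX.lift := by
    simpa only [pushout.inr_desc_assoc, pushout.inr_desc] using pushout.inr _ _ ≫= sqB.fac_left
  refine ⟨⟨⟨sq'.desc sqB.lift sqX.lift hiB, ?_, ?_⟩⟩⟩
  · apply sq.hom_ext
    · rw [reassoc_of% hm₁, sq'.inl_desc, hbB]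
    · rw [reassoc_of% hm₂, sq'.inr_desc, sqX.fac_left]
  · apply sq'.hom_ext
    · rw [sq'.inl_desc_assoc, sqB.fac_right]
    · rw [sq'.inr_desc_assoc, sqX.fac_right]

theorem exists_relativeCylinder {A B : C} (i : A ⟶ B) [Cofibration i] [IsCofibrant A]
    (P : Cylinder A) [P.IsGood] :
    ∃ (B' : C) (i' : P.I ⟶ B') (e₀ e₁ : B ⟶ B') (r : B' ⟶ B)
      (h₀ : i ≫ e₀ = P.i₀ ≫ i') (h₁ : i ≫ e₁ = P.i₁ ≫ i'),
      e₀ ≫ r = 𝟙 B ∧ e₁ ≫ r = 𝟙 B ∧ i' ≫ r = P.π ≫ i ∧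
      trivialCofibrations C (pushout.desc e₀ i' h₀) ∧
      trivialCofibrations C (pushout.desc e₁ i' h₁) := by
  let π₀ : pushout i P.i₀ ⟶ B := pushout.desc (𝟙 B) (P.π ≫ i) (by simp)
  let π₁ : pushout i P.i₁ ⟶ B := pushout.desc (𝟙 B) (P.π ≫ i) (by simp)
  let πL : pushout (pushout.inr i P.i₀) (pushout.inr i P.i₁) ⟶ B :=
    pushout.desc π₀ π₁ (by simp only [π₀, π₁, pushout.inr_desc])
  let F := factorizationData (cofibrations C) (trivialFibrations C) πL
  have latching_trivialCofibration (j : A ⟶ P.I) [Cofibration j] [WeakEquivalence j]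
      (n : pushout i j ⟶ pushout (pushout.inr i P.i₀) (pushout.inr i P.i₁)) [Cofibration n]
      (hn : pushout.inl i j ≫ n ≫ πL = 𝟙 B) : trivialCofibrations C (n ≫ F.i) := by
    have : WeakEquivalence (n ≫ πL) := weakEquivalence_of_precomp_of_fac hn
    have : WeakEquivalence (n ≫ F.i) :=
      weakEquivalence_of_postcomp_of_fac (by rw [assoc, F.fac])
    exact mem_trivialCofibrations _
  refine ⟨F.Z, pushout.inr i P.i₀ ≫ pushout.inl _ _ ≫ F.i,
    pushout.inl i P.i₀ ≫ pushout.inl _ _ ≫ F.i, pushout.inl i P.i₁ ≫ pushout.inr _ _ ≫ F.i, F.p,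
    by simp [pushout.condition_assoc], by simp [pushout.condition_assoc], ?_, ?_, ?_, ?_, ?_⟩
  · simp [π₀, πL, pushout.inl_desc]
  · simp [π₁, πL, pushout.inl_desc, pushout.inr_desc]
  · simp only [assoc, F.fac, πL, pushout.inl_desc, π₀, pushout.inr_desc]
  · convert latching_trivialCofibration P.i₀ (pushout.inl _ _)
      (by simp [πL, π₀, pushout.inl_desc]) using 1
    apply pushout.hom_ext <;> simp [pushout.inl_desc, pushout.inr_desc]
  · convert latching_trivialCofibration P.i₁ (pushout.inr _ _)
      (by simp [πL, π₁, pushout.inl_desc, pushout.inr_desc]) using 1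
    apply pushout.hom_ext <;> simp [pushout.inl_desc, pushout.inr_desc, pushout.condition_assoc]

theorem weakEquivalence_of_isPushout_of_isCofibrant_s16 {A B D E : C} {i : A ⟶ B} {f : A ⟶ D}
    {g : B ⟶ E} {h : D ⟶ E} (sq : IsPushout i f g h) [Cofibration i] [WeakEquivalence f]
    [IsCofibrant A] [IsCofibrant D] : WeakEquivalence g := by
  obtain ⟨K⟩ : Nonempty (CofibrantBrownFactorization f) := inferInstance
  obtain ⟨P, _⟩ := Cylinder.exists_very_good A
  obtain ⟨H, hH₀, hH₁, hHp⟩ : ∃ H : P.I ⟶ K.Z,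
      P.i₀ ≫ H = K.i ∧ P.i₁ ≫ H = f ≫ K.s ∧ H ≫ K.p = P.π ≫ f := by
    have htpy : CommSq (coprod.desc K.i (f ≫ K.s)) P.i K.p (P.π ≫ f) :=
      ⟨by ext <;> simp [coprod.inl_desc, coprod.inr_desc]⟩
    exact ⟨htpy.lift,
      by simpa only [P.inl_i_assoc, coprod.inl_desc] using coprod.inl ≫= htpy.fac_left,
      by simpa only [P.inr_i_assoc, coprod.inr_desc] using coprod.inr ≫= htpy.fac_left,
      htpy.fac_right⟩
  obtain ⟨B', i', e₀, e₁, r, h₀, h₁, he₀, he₁, hi', hlatch₀, hlatch₁⟩ :=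
    exists_relativeCylinder i P
  have sqQ := IsPushout.of_hasPushout i' H
  let κ : pushout i' H ⟶ E :=
    sqQ.desc (r ≫ g) (K.p ≫ h) (by rw [reassoc_of% hi', reassoc_of% hHp, sq.w])
  let ψ : E ⟶ pushout i' H := sq.desc (e₁ ≫ pushout.inl _ _) (K.s ≫ pushout.inr _ _)
    (by rw [reassoc_of% h₁, pushout.condition, reassoc_of% hH₁])
  have : WeakEquivalence (e₀ ≫ pushout.inl i' H) :=
    ((mem_trivialCofibrations_iff _).1 (trivialCofibrations_of_isPushout_map
      (IsPushout.id_vert i) sqQ P.i₀ e₀ K.i h₀ (by simp [hH₀]) hlatch₀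
      (mem_trivialCofibrations _) _ (by simp)
      (by rw [reassoc_of% h₀, pushout.condition, reassoc_of% hH₀]))).2
  have : WeakEquivalence ψ :=
    ((mem_trivialCofibrations_iff _).1 (trivialCofibrations_of_isPushout_map
      sq sqQ P.i₁ e₁ K.s h₁ hH₁.symm hlatch₁ (mem_trivialCofibrations _) _
      (sq.inl_desc _ _ _) (sq.inr_desc _ _ _))).2
  have : WeakEquivalence κ := weakEquivalence_of_precomp_of_fac (f := ψ) (fg := 𝟙 E)
    (sq.hom_ext (by simp [ψ, κ, reassoc_of% he₁]) (by simp [ψ, κ]))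
  have hg : (e₀ ≫ pushout.inl i' H) ≫ κ = g := by simp [κ, reassoc_of% he₀]
  rw [← hg]
  infer_instance

end HomotopicalAlgebra

/-- A model category in which every object is cofibrant is left proper: in any pushout
square, the cobase change of a weak equivalence along a cofibration is a weak
equivalence. -/
theorem left_proper_of_all_objects_cofibrant
    {C : Type u} [Category.{v} C] [HasLimits C] [HasColimits C]
    (M : ModelStructure C)
    (hcof : ∀ X : C, M.cof (initial.to X))
    {A B D E : C} (i : A ⟶ B) (f : A ⟶ D) (g : B ⟶ E) (h : D ⟶ E)
    (sq : IsPushout i f g h) (hi : M.cof i) (hf : M.weq f) :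
    M.weq g := by
  let := M.toModelCategory_s16
  have : ∀ X : C, HomotopicalAlgebra.IsCofibrant X := fun X => ⟨hcof X⟩
  have : HomotopicalAlgebra.Cofibration i := ⟨hi⟩
  have : HomotopicalAlgebra.WeakEquivalence f := ⟨hf⟩
  exact (HomotopicalAlgebra.weakEquivalence_of_isPushout_of_isCofibrant_s16 sq).mem
end

section
/- Let M be a model category in which every object is fibrant. Then M is right proper: if p : X ⟶ Z is a fibration and f : Y ⟶ Z is a weak equivalence, then the projection W ⟶ X from the pullback W = X ×_Z Y is a weak equivalence. -/
open CategoryTheory CategoryTheory.Limits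

universe v u

namespace RightProperAux

set_option linter.unnecessarySimpa false

variable {C : Type u} [Category.{v} C]

/-- A retract (in the arrow category) transfer lemma, stated with explicit components. -/
lemma retract_aux {P : MorphismProperty C}
    (hP : ∀ {f g : Arrow C} (i : f ⟶ g) (r : g ⟶ f), i ≫ r = 𝟙 f → P g.hom → P f.hom)
    {X Y X' Y' : C} {f : X ⟶ Y} {g : X' ⟶ Y'}
    (a : X ⟶ X') (b : Y ⟶ Y') (a' : X' ⟶ X) (b' : Y' ⟶ Y)
    (h1 : a ≫ g = f ≫ b) (h2 : a' ≫ f = g ≫ b')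
    (ha : a ≫ a' = 𝟙 X) (hb : b ≫ b' = 𝟙 Y) (hg : P g) : P f := by
  exact hP (f := Arrow.mk f) (g := Arrow.mk g) (Arrow.homMk' a b h1) (Arrow.homMk' a' b' h2)
    (by ext <;> simp [ha, hb]) hg

variable (M : ModelStructure C)

lemma weq_id (X : C) : M.weq (𝟙 X) := by
  obtain ⟨Z, i, p, hci, hwi, hfp, hfac⟩ := M.factor_trivCof_fib (𝟙 X)
  exact retract_aux M.weq_retract (𝟙 X) i (𝟙 X) p (by simp) (by simp [hfac])
    (by simp) hfac hwi

lemma cof_of_llp {A B : C} {g : A ⟶ B}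
    (h : ∀ {U V : C} (p : U ⟶ V), M.fib p → M.weq p → HasLiftingProperty g p) : M.cof g := by
  obtain ⟨Z, i0, p0, hci, hfp, hwp, hfac⟩ := M.factor_cof_trivFib g
  haveI := h p0 hfp hwp
  have sq : CommSq i0 g p0 (𝟙 B) := ⟨by simp [hfac]⟩
  exact retract_aux M.cof_retract (𝟙 A) sq.lift (𝟙 A) p0
    (by simpa using sq.fac_left.symm) (by simp [hfac]) (by simp) sq.fac_right hci

lemma trivCof_of_llp {A B : C} {g : A ⟶ B}
    (h : ∀ {U V : C} (p : U ⟶ V), M.fib p → HasLiftingProperty g p) :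
    M.cof g ∧ M.weq g := by
  obtain ⟨Z, i0, p0, hci, hwi, hfp, hfac⟩ := M.factor_trivCof_fib g
  haveI := h p0 hfp
  have sq : CommSq i0 g p0 (𝟙 B) := ⟨by simp [hfac]⟩
  constructor
  · exact retract_aux M.cof_retract (𝟙 A) sq.lift (𝟙 A) p0
      (by simpa using sq.fac_left.symm) (by simp [hfac]) (by simp) sq.fac_right hci
  · exact retract_aux M.weq_retract (𝟙 A) sq.lift (𝟙 A) p0
      (by simpa using sq.fac_left.symm) (by simp [hfac]) (by simp) sq.fac_right hwi

lemma fib_of_rlp {U V : C} {p : U ⟶ V}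
    (h : ∀ {A B : C} (g : A ⟶ B), M.cof g → M.weq g → HasLiftingProperty g p) : M.fib p := by
  obtain ⟨Z, i0, p0, hci, hwi, hfp, hfac⟩ := M.factor_trivCof_fib p
  haveI := h i0 hci hwi
  have sq : CommSq (𝟙 U) i0 p p0 := ⟨by simp [hfac]⟩
  exact retract_aux M.fib_retract i0 (𝟙 V) sq.lift (𝟙 V)
    (by simp [hfac]) (by simpa using sq.fac_right) sq.fac_left (by simp) hfp

lemma trivFib_of_rlp {U V : C} {p : U ⟶ V}
    (h : ∀ {A B : C} (g : A ⟶ B), M.cof g → HasLiftingProperty g p) :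
    M.fib p ∧ M.weq p := by
  obtain ⟨Z, i0, p0, hci, hfp, hwp, hfac⟩ := M.factor_cof_trivFib p
  haveI := h i0 hci
  have sq : CommSq (𝟙 U) i0 p p0 := ⟨by simp [hfac]⟩
  constructor
  · exact retract_aux M.fib_retract i0 (𝟙 V) sq.lift (𝟙 V)
      (by simp [hfac]) (by simpa using sq.fac_right) sq.fac_left (by simp) hfp
  · exact retract_aux M.weq_retract i0 (𝟙 V) sq.lift (𝟙 V)
      (by simp [hfac]) (by simpa using sq.fac_right) sq.fac_left (by simp) hwp

lemma cof_comp {A B D : C} {a : A ⟶ B} {b : B ⟶ D} (ha : M.cof a) (hb : M.cof b) :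
    M.cof (a ≫ b) := by
  apply cof_of_llp
  intro U V p hf hw
  haveI := M.lift_of_trivFib a p ha hf hw
  haveI := M.lift_of_trivFib b p hb hf hw
  infer_instance

lemma fib_comp {A B D : C} {a : A ⟶ B} {b : B ⟶ D} (ha : M.fib a) (hb : M.fib b) :
    M.fib (a ≫ b) := by
  apply fib_of_rlp
  intro U V g hc hw
  haveI := M.lift_of_trivCof g a hc hw ha
  haveI := M.lift_of_trivCof g b hc hw hb
  infer_instance

/-- Cobase change along a pushout: `pushout.inl` inherits the left lifting property of `g`. -/
lemma hlp_pushout_inl {A B D U V : C} (f : A ⟶ B) (g : A ⟶ D) (π : U ⟶ V) [HasPushout f g]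
    [HasLiftingProperty g π] : HasLiftingProperty (pushout.inl f g) π := by
  constructor
  intro a b sqab
  have sqe : CommSq (f ≫ a) g π (pushout.inr f g ≫ b) :=
    ⟨by rw [Category.assoc, sqab.w, ← Category.assoc, pushout.condition, Category.assoc]⟩
  exact CommSq.HasLift.mk'
    { l := pushout.desc a sqe.lift sqe.fac_left.symm
      fac_left := by simp [pushout.inl_desc, pushout.inl_desc_assoc, pushout.inr_desc, pushout.inr_desc_assoc]
      fac_right := by
        apply pushout.hom_ext
        · simpa [pushout.inl_desc, pushout.inl_desc_assoc, pushout.inr_desc, pushout.inr_desc_assoc] using sqab.w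
        · simpa [pushout.inl_desc, pushout.inl_desc_assoc, pushout.inr_desc, pushout.inr_desc_assoc] using sqe.fac_right }

/-- If `initial.to X'` has the left lifting property with respect to `π`,
then so does `coprod.inl : X ⟶ X ⨿ X'`. -/
lemma hlp_coprod_inl {X X' U V : C} (π : U ⟶ V) [HasInitial C] [HasBinaryCoproduct X X']
    [HasLiftingProperty (initial.to X') π] :
    HasLiftingProperty (coprod.inl : X ⟶ X ⨿ X') π := by
  constructor
  intro a b sqab
  have sqe : CommSq (initial.to U) (initial.to X') π (coprod.inr ≫ b) :=
    ⟨initial.hom_ext _ _⟩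
  exact CommSq.HasLift.mk'
    { l := coprod.desc a sqe.lift
      fac_left := by simp [coprod.inl_desc, coprod.inl_desc_assoc, coprod.inr_desc, coprod.inr_desc_assoc]
      fac_right := by
        apply coprod.hom_ext
        · simpa [coprod.inl_desc, coprod.inl_desc_assoc, coprod.inr_desc, coprod.inr_desc_assoc] using sqab.w
        · simpa [coprod.inl_desc, coprod.inl_desc_assoc, coprod.inr_desc, coprod.inr_desc_assoc] using sqe.fac_right }

/-- Lifting properties transfer along pullbacks: if `g` lifts against `p'`, then it lifts
against the base change `snd'` of `p'`. -/
lemma hlp_of_isPullback {P X Y Z A B : C} {fst' : P ⟶ X} {snd' : P ⟶ Y} {p' : X ⟶ Z}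
    {f' : Y ⟶ Z} (h : IsPullback fst' snd' p' f') {g : A ⟶ B}
    [HasLiftingProperty g p'] : HasLiftingProperty g snd' := by
  constructor
  intro a b sqab
  have sq2 : CommSq (a ≫ fst') g p' (b ≫ f') :=
    ⟨by rw [Category.assoc, h.w, ← Category.assoc, sqab.w, Category.assoc]⟩
  refine CommSq.HasLift.mk'
    { l := h.lift sq2.lift b (by simpa using sq2.fac_right)
      fac_left := ?_
      fac_right := by simp }
  apply h.hom_ext
  · simpa using sq2.fac_left
  · rw [Category.assoc, h.lift_snd, sqab.w]

lemma fib_of_isPullback {P X Y Z : C} {fst' : P ⟶ X} {snd' : P ⟶ Y} {p' : X ⟶ Z}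
    {f' : Y ⟶ Z} (h : IsPullback fst' snd' p' f') (hp : M.fib p') : M.fib snd' := by
  apply fib_of_rlp
  intro A B g hc hw
  haveI := M.lift_of_trivCof g p' hc hw hp
  exact hlp_of_isPullback h

lemma trivFib_of_isPullback {P X Y Z : C} {fst' : P ⟶ X} {snd' : P ⟶ Y} {p' : X ⟶ Z}
    {f' : Y ⟶ Z} (h : IsPullback fst' snd' p' f') (hp : M.fib p') (hwp : M.weq p') :
    M.fib snd' ∧ M.weq snd' := by
  apply trivFib_of_rlp
  intro A B g hc
  haveI := M.lift_of_trivFib g p' hc hp hwp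
  exact hlp_of_isPullback h

/-- When every object is fibrant, the projections of a binary product are fibrations. -/
lemma fib_prodFst [HasTerminal C] (hfib : ∀ X : C, M.fib (terminal.from X))
    (X Y : C) [HasBinaryProduct X Y] : M.fib (prod.fst : X ⨯ Y ⟶ X) := by
  apply fib_of_rlp
  intro A B g hc hw
  haveI := M.lift_of_trivCof g (terminal.from Y) hc hw (hfib Y)
  constructor
  intro a b sqab
  have sq2 : CommSq (a ≫ prod.snd) g (terminal.from Y) (terminal.from B) :=
    ⟨terminal.hom_ext _ _⟩
  exact CommSq.HasLift.mk'
    { l := prod.lift b sq2.lift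
      fac_left := by
        apply Limits.prod.hom_ext
        · simpa [prod.lift_fst, prod.lift_fst_assoc, prod.lift_snd, prod.lift_snd_assoc] using sqab.w.symm
        · simpa [prod.lift_fst, prod.lift_fst_assoc, prod.lift_snd, prod.lift_snd_assoc] using sq2.fac_left
      fac_right := by simp [prod.lift_fst, prod.lift_fst_assoc, prod.lift_snd, prod.lift_snd_assoc] }

lemma fib_prodSnd [HasTerminal C] (hfib : ∀ X : C, M.fib (terminal.from X))
    (X Y : C) [HasBinaryProduct X Y] : M.fib (prod.snd : X ⨯ Y ⟶ Y) := by
  apply fib_of_rlp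
  intro A B g hc hw
  haveI := M.lift_of_trivCof g (terminal.from X) hc hw (hfib X)
  constructor
  intro a b sqab
  have sq2 : CommSq (a ≫ prod.fst) g (terminal.from X) (terminal.from B) :=
    ⟨terminal.hom_ext _ _⟩
  exact CommSq.HasLift.mk'
    { l := prod.lift sq2.lift b
      fac_left := by
        apply Limits.prod.hom_ext
        · simpa [prod.lift_fst, prod.lift_fst_assoc, prod.lift_snd, prod.lift_snd_assoc] using sq2.fac_left
        · simpa [prod.lift_fst, prod.lift_fst_assoc, prod.lift_snd, prod.lift_snd_assoc] using sqab.w.symm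
      fac_right := by simp [prod.lift_fst, prod.lift_fst_assoc, prod.lift_snd, prod.lift_snd_assoc] }

/-- The crucial case: the base change of a trivial cofibration along a fibration is a
weak equivalence, provided every object is fibrant. -/
lemma crux [HasLimits C] [HasColimits C]
    (hfib : ∀ X : C, M.fib (terminal.from X))
    {Y Y' X' W : C} {i : Y ⟶ Y'} (hci : M.cof i) (hwi : M.weq i)
    {r : X' ⟶ Y'} (hr : M.fib r) {j : W ⟶ X'} {sd : W ⟶ Y}
    (sq : IsPullback j sd r i) : M.weq j := by
  -- a retraction `s` of `i`, using fibrancy of `Y`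
  have sqS : CommSq (𝟙 Y) i (terminal.from Y) (terminal.from Y') := ⟨terminal.hom_ext _ _⟩
  obtain ⟨⟨⟨s, hs, -⟩⟩⟩ := (M.lift_of_trivCof i (terminal.from Y) hci hwi (hfib Y)).sq_hasLift sqS
  -- a path object for `Y'`
  obtain ⟨PY, w, π, hcw, hww, hfπ, hfacπ⟩ :=
    M.factor_trivCof_fib (prod.lift (𝟙 Y') (𝟙 Y'))
  have hwev0 : w ≫ π ≫ prod.fst = 𝟙 Y' := by
    rw [← Category.assoc, hfacπ, prod.lift_fst]
  have hwev1 : w ≫ π ≫ prod.snd = 𝟙 Y' := by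
    rw [← Category.assoc, hfacπ, prod.lift_snd]
  have hfev0 : M.fib (π ≫ prod.fst) := fib_comp M hfπ (fib_prodFst M hfib _ _)
  have hwev0' : M.weq (π ≫ prod.fst) :=
    M.weq_cancel_left w _ hww (by rw [hwev0]; exact weq_id M _)
  -- the homotopy `H : 𝟙 Y' ∼ s ≫ i` rel `Y`
  have sqH : CommSq (i ≫ w) i π (prod.lift (𝟙 Y') (s ≫ i)) := ⟨by
    rw [Category.assoc, hfacπ, prod.comp_lift, prod.comp_lift]
    simp only [Category.comp_id]
    rw [← Category.assoc, hs, Category.id_comp]⟩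
  obtain ⟨⟨⟨H, hiH, hHπ⟩⟩⟩ := (M.lift_of_trivCof i π hci hwi hfπ).sq_hasLift sqH
  have hHev0 : H ≫ π ≫ prod.fst = 𝟙 Y' := by
    rw [← Category.assoc, hHπ, prod.lift_fst]
  have hHev1 : H ≫ π ≫ prod.snd = s ≫ i := by
    rw [← Category.assoc, hHπ, prod.lift_snd]
  -- cofibrant replacement of `W`, and a cofibrant resolution of `j`
  obtain ⟨QW, c₀, qW, hc₀, hfqW, hwqW, hfac₀⟩ := M.factor_cof_trivFib (initial.to W)
  have hQW : M.cof (initial.to QW) := by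
    rw [show initial.to QW = c₀ from initial.hom_ext _ _]; exact hc₀
  obtain ⟨QX, J, qX, hJ, hfqX, hwqX, hfacJ⟩ := M.factor_cof_trivFib (qW ≫ j)
  have hQX : M.cof (initial.to QX) := by
    rw [show initial.to QX = initial.to QW ≫ J from initial.hom_ext _ _]
    exact cof_comp M hQW hJ
  -- a cylinder object for `QW`
  obtain ⟨CW, cW, σW, hcW, hfσW, hwσW, hfacW⟩ :=
    M.factor_cof_trivFib (coprod.desc (𝟙 QW) (𝟙 QW))
  have hin0σ : coprod.inl ≫ cW ≫ σW = 𝟙 QW := by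
    rw [hfacW, coprod.inl_desc]
  have hin1σ : coprod.inr ≫ cW ≫ σW = 𝟙 QW := by
    rw [hfacW, coprod.inr_desc]
  have hinlcof : M.cof (coprod.inl : QW ⟶ QW ⨿ QW) := by
    apply cof_of_llp
    intro U V p hf hw
    haveI := M.lift_of_trivFib (initial.to QW) p hQW hf hw
    exact hlp_coprod_inl p
  have hin0cof : M.cof (coprod.inl ≫ cW) := cof_comp M hinlcof hcW
  have hin0weq : M.weq (coprod.inl ≫ cW) :=
    M.weq_cancel_right _ σW hwσW
      (by rw [Category.assoc, hin0σ]; exact weq_id M _)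
  -- the object `P₁ = (QX ⨿ QX) ∪_{QW ⨿ QW} CW`, and the relative cylinder `CJ` for `J`
  have hεcond : coprod.map J J ≫ coprod.desc (𝟙 QX) (𝟙 QX) = cW ≫ σW ≫ J := by
    rw [coprod.map_desc, ← Category.assoc, hfacW, coprod.desc_comp]
    simp
  obtain ⟨CJ, c₁, σJ, hc₁, hfσJ, hwσJ, hfacε⟩ :=
    M.factor_cof_trivFib (pushout.desc (coprod.desc (𝟙 QX) (𝟙 QX)) (σW ≫ J) hεcond)
  have hγε : pushout.inl (coprod.map J J) cW ≫ c₁ ≫ σJ = coprod.desc (𝟙 QX) (𝟙 QX) := by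
    rw [hfacε, pushout.inl_desc]
  have hκε : pushout.inr (coprod.map J J) cW ≫ c₁ ≫ σJ = σW ≫ J := by
    rw [hfacε, pushout.inr_desc]
  have hI0σ : (coprod.inl ≫ pushout.inl (coprod.map J J) cW ≫ c₁) ≫ σJ = 𝟙 QX := by
    simp only [Category.assoc]
    rw [hγε, coprod.inl_desc]
  have hI1σ : (coprod.inr ≫ pushout.inl (coprod.map J J) cW ≫ c₁) ≫ σJ = 𝟙 QX := by
    simp only [Category.assoc]
    rw [hγε, coprod.inr_desc]
  -- interaction of `J` with the structure maps
  have hJγ0 : J ≫ coprod.inl ≫ pushout.inl (coprod.map J J) cW =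
      (coprod.inl ≫ cW) ≫ pushout.inr (coprod.map J J) cW := by
    rw [← Category.assoc, ← coprod.inl_map J J, Category.assoc, pushout.condition,
      ← Category.assoc]
  have hJγ1 : J ≫ coprod.inr ≫ pushout.inl (coprod.map J J) cW =
      coprod.inr ≫ cW ≫ pushout.inr (coprod.map J J) cW := by
    rw [← Category.assoc, ← coprod.inr_map J J, Category.assoc, pushout.condition]
  have hJI0 : J ≫ coprod.inl ≫ pushout.inl (coprod.map J J) cW ≫ c₁ =
      coprod.inl ≫ cW ≫ pushout.inr (coprod.map J J) cW ≫ c₁ := by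
    simp only [← Category.assoc]
    simp only [← Category.assoc] at hJγ0
    rw [hJγ0]
  have hJI1 : J ≫ coprod.inr ≫ pushout.inl (coprod.map J J) cW ≫ c₁ =
      coprod.inr ≫ cW ≫ pushout.inr (coprod.map J J) cW ≫ c₁ := by
    simp only [← Category.assoc]
    simp only [← Category.assoc] at hJγ1
    rw [hJγ1]
  -- `M₀ = QX ∪_{QW} CW` (gluing along the `0`-end of the cylinder)
  have hm0cond : J ≫ (coprod.inl ≫ pushout.inl (coprod.map J J) cW) =
      (coprod.inl ≫ cW) ≫ pushout.inr (coprod.map J J) cW := by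
    have h := hJγ0
    simp only [← Category.assoc] at h ⊢
    rw [h]
  have hm0cond' : J ≫ (coprod.inl ≫ pushout.inl (coprod.map J J) cW ≫ c₁) =
      (coprod.inl ≫ cW) ≫ pushout.inr (coprod.map J J) cW ≫ c₁ := by
    simp only [Category.assoc]
    exact hJI0
  -- `ν : M₀ ⟶ P₁` is a cofibration, by a direct lifting argument
  have hνcof : M.cof (pushout.desc (coprod.inl ≫ pushout.inl (coprod.map J J) cW)
      (pushout.inr (coprod.map J J) cW) hm0cond) := by
    apply cof_of_llp
    intro U V p hf hw
    constructor
    intro a b sqab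
    have sqe : CommSq ((coprod.inr ≫ cW) ≫ pushout.inr J (coprod.inl ≫ cW) ≫ a) J p
        (coprod.inr ≫ pushout.inl (coprod.map J J) cW ≫ b) := by
      constructor
      have h := hJγ1
      simp only [Category.assoc]
      rw [sqab.w]
      try simp only [pushout.inr_desc_assoc]
      try (simp only [← Category.assoc] at h ⊢; rw [h])
    obtain ⟨⟨⟨e, he1, he2⟩⟩⟩ := (M.lift_of_trivFib J p hJ hf hw).sq_hasLift sqe
    have hLcond : coprod.map J J ≫
        coprod.desc (pushout.inl J (coprod.inl ≫ cW) ≫ a) e =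
        cW ≫ pushout.inr J (coprod.inl ≫ cW) ≫ a := by
      apply coprod.hom_ext
      · rw [← Category.assoc, coprod.inl_map, Category.assoc, coprod.inl_desc]
        rw [← Category.assoc, pushout.condition]
        try simp only [Category.assoc]
        try (rw [← Category.assoc, ← Category.assoc]; simp only [Category.assoc])
      · rw [← Category.assoc, coprod.inr_map, Category.assoc, coprod.inr_desc, he1]
        simp only [Category.assoc]
    refine CommSq.HasLift.mk'
      { l := pushout.desc (coprod.desc (pushout.inl J (coprod.inl ≫ cW) ≫ a) e)
          (pushout.inr J (coprod.inl ≫ cW) ≫ a) hLcond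
        fac_left := ?_
        fac_right := ?_ }
    · apply pushout.hom_ext
      · simp only [pushout.inl_desc_assoc, Category.assoc, pushout.inl_desc, coprod.inl_desc]
      · simp only [pushout.inr_desc_assoc, Category.assoc, pushout.inr_desc]
    · apply pushout.hom_ext
      · apply coprod.hom_ext
        · simp only [pushout.inl_desc_assoc, coprod.inl_desc_assoc, Category.assoc,
            pushout.inl_desc]
          rw [sqab.w]
          try simp only [pushout.inl_desc_assoc]
          try simp only [Category.assoc]
        · simp only [pushout.inl_desc_assoc, coprod.inr_desc_assoc]
          rw [he2]
          try simp only [Category.assoc]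
      · simp only [pushout.inr_desc_assoc, Category.assoc]
        rw [sqab.w]
        try simp only [pushout.inr_desc_assoc]
        try simp only [Category.assoc]
  -- `m₀ : M₀ ⟶ CJ`, a trivial cofibration
  have hm0eq : pushout.desc (coprod.inl ≫ pushout.inl (coprod.map J J) cW)
        (pushout.inr (coprod.map J J) cW) hm0cond ≫ c₁ =
      pushout.desc (coprod.inl ≫ pushout.inl (coprod.map J J) cW ≫ c₁)
        (pushout.inr (coprod.map J J) cW ≫ c₁) hm0cond' := by
    apply pushout.hom_ext
    · simp only [pushout.inl_desc_assoc, pushout.inl_desc, Category.assoc]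
    · simp only [pushout.inr_desc_assoc, pushout.inr_desc]
  have hm0cof : M.cof (pushout.desc (coprod.inl ≫ pushout.inl (coprod.map J J) cW ≫ c₁)
      (pushout.inr (coprod.map J J) cW ≫ c₁) hm0cond') := by
    rw [← hm0eq]
    exact cof_comp M hνcof hc₁
  have hminlweq : M.weq (pushout.inl J (coprod.inl ≫ cW)) := by
    refine (trivCof_of_llp M ?_).2
    intro U V p hf
    haveI := M.lift_of_trivCof (coprod.inl ≫ cW) p hin0cof hin0weq hf
    exact hlp_pushout_inl J (coprod.inl ≫ cW) p
  have hI0weq : M.weq (coprod.inl ≫ pushout.inl (coprod.map J J) cW ≫ c₁) :=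
    M.weq_cancel_right _ σJ hwσJ (by rw [hI0σ]; exact weq_id M _)
  have hI1weq : M.weq (coprod.inr ≫ pushout.inl (coprod.map J J) cW ≫ c₁) :=
    M.weq_cancel_right _ σJ hwσJ (by rw [hI1σ]; exact weq_id M _)
  have hm0weq : M.weq (pushout.desc (coprod.inl ≫ pushout.inl (coprod.map J J) cW ≫ c₁)
      (pushout.inr (coprod.map J J) cW ≫ c₁) hm0cond') := by
    refine M.weq_cancel_left (pushout.inl J (coprod.inl ≫ cW)) _ hminlweq ?_
    rw [pushout.inl_desc]
    exact hI0weq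
  -- the relative homotopy `G = Λ ≫ ev₁ : CJ ⟶ Y'`
  have hΦcond : coprod.map J J ≫ coprod.desc (qX ≫ r ≫ w) (qX ≫ r ≫ H) =
      cW ≫ σW ≫ qW ≫ sd ≫ i ≫ w := by
    apply coprod.hom_ext
    · rw [← Category.assoc, coprod.inl_map, Category.assoc, coprod.inl_desc]
      rw [reassoc_of% hfacJ, reassoc_of% sq.w, reassoc_of% hin0σ]
    · rw [← Category.assoc, coprod.inr_map, Category.assoc, coprod.inr_desc]
      rw [reassoc_of% hfacJ, reassoc_of% sq.w, reassoc_of% hin1σ, hiH]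
  have sqΛ : CommSq (pushout.desc (coprod.desc (qX ≫ r ≫ w) (qX ≫ r ≫ H))
      (σW ≫ qW ≫ sd ≫ i ≫ w) hΦcond) c₁ (π ≫ prod.fst) (σJ ≫ qX ≫ r) := by
    constructor
    apply pushout.hom_ext
    · rw [pushout.inl_desc_assoc, reassoc_of% hγε]
      apply coprod.hom_ext
      · simp only [coprod.inl_desc_assoc, Category.assoc, coprod.inl_desc]
        rw [hwev0]
        simp
      · simp only [coprod.inr_desc_assoc, Category.assoc, coprod.inr_desc]
        rw [hHev0]
        simp
    · rw [pushout.inr_desc_assoc, reassoc_of% hκε]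
      simp only [Category.assoc]
      rw [hwev0]
      rw [reassoc_of% hfacJ, sq.w]
      simp
  obtain ⟨⟨⟨Λ, hΛ1, hΛ2⟩⟩⟩ :=
    (M.lift_of_trivFib c₁ (π ≫ prod.fst) hc₁ hfev0 hwev0').sq_hasLift sqΛ
  -- the deformation `D : CJ ⟶ X'` of `qX`
  have hΨcond : J ≫ qX = (coprod.inl ≫ cW) ≫ σW ≫ qW ≫ j := by
    rw [Category.assoc, reassoc_of% hin0σ]
    exact hfacJ
  have sqD : CommSq (pushout.desc qX (σW ≫ qW ≫ j) hΨcond)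
      (pushout.desc (coprod.inl ≫ pushout.inl (coprod.map J J) cW ≫ c₁)
        (pushout.inr (coprod.map J J) cW ≫ c₁) hm0cond') r (Λ ≫ π ≫ prod.snd) := by
    constructor
    apply pushout.hom_ext
    · simp only [pushout.inl_desc_assoc, pushout.inl_desc, Category.assoc]
      rw [reassoc_of% hΛ1]
      simp only [pushout.inl_desc_assoc, coprod.inl_desc_assoc, Category.assoc]
      rw [hwev1]
      simp
    · simp only [pushout.inr_desc_assoc, Category.assoc]
      rw [sq.w]
      rw [reassoc_of% hΛ1]
      simp only [pushout.inr_desc_assoc, Category.assoc]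
      rw [hwev1]
      simp
  obtain ⟨⟨⟨D, hD1, hD2⟩⟩⟩ :=
    (M.lift_of_trivCof _ r hm0cof hm0weq hr).sq_hasLift sqD
  -- key identities for `D`
  have hI0D : coprod.inl ≫ pushout.inl (coprod.map J J) cW ≫ c₁ ≫ D = qX := by
    have h := congrArg (fun t => pushout.inl J (coprod.inl ≫ cW) ≫ t) hD1
    simpa [pushout.inl_desc, pushout.inl_desc_assoc, pushout.inr_desc, pushout.inr_desc_assoc] using h
  have hκD : pushout.inr (coprod.map J J) cW ≫ c₁ ≫ D = σW ≫ qW ≫ j := by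
    have h := congrArg (fun t => pushout.inr J (coprod.inl ≫ cW) ≫ t) hD1
    simpa [pushout.inl_desc, pushout.inl_desc_assoc, pushout.inr_desc, pushout.inr_desc_assoc] using h
  have hI1Dr : coprod.inr ≫ pushout.inl (coprod.map J J) cW ≫ c₁ ≫ D ≫ r =
      qX ≫ r ≫ s ≫ i := by
    rw [hD2]
    simp only [← Category.assoc]
    simp only [Category.assoc]
    rw [reassoc_of% hΛ1]
    simp only [pushout.inl_desc_assoc, coprod.inr_desc_assoc, Category.assoc]
    rw [hHev1]
  have hJδ : J ≫ coprod.inr ≫ pushout.inl (coprod.map J J) cW ≫ c₁ ≫ D = qW ≫ j := by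
    rw [reassoc_of% hJI1, hκD, reassoc_of% hin1σ]
  -- the section `T` of `J`
  have hδw : (coprod.inr ≫ pushout.inl (coprod.map J J) cW ≫ c₁ ≫ D) ≫ r =
      (qX ≫ r ≫ s) ≫ i := by
    simp only [Category.assoc]
    exact hI1Dr
  have hJτ : J ≫ sq.lift (coprod.inr ≫ pushout.inl (coprod.map J J) cW ≫ c₁ ≫ D)
      (qX ≫ r ≫ s) hδw = qW := by
    apply sq.hom_ext
    · rw [Category.assoc, IsPullback.lift_fst]
      exact hJδ
    · rw [Category.assoc, IsPullback.lift_snd]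
      rw [reassoc_of% hfacJ, reassoc_of% sq.w, hs]
      simp
  have sqT : CommSq (𝟙 QW) J qW (sq.lift _ _ hδw) := by
    constructor
    rw [Category.id_comp, hJτ]
  obtain ⟨⟨⟨T, hT1, hT2⟩⟩⟩ := (M.lift_of_trivFib J qW hJ hfqW hwqW).sq_hasLift sqT
  -- the homotopy upstairs, using cofibrancy of the cylinder inclusion `γ ≫ c₁`
  have hγcof : M.cof (pushout.inl (coprod.map J J) cW) := by
    apply cof_of_llp
    intro U V p hf hw
    haveI := M.lift_of_trivFib cW p hcW hf hw
    exact hlp_pushout_inl (coprod.map J J) cW p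
  have hcccof : M.cof (pushout.inl (coprod.map J J) cW ≫ c₁) := cof_comp M hγcof hc₁
  have sqD' : CommSq (coprod.desc (𝟙 QX) (T ≫ J))
      (pushout.inl (coprod.map J J) cW ≫ c₁) qX D := by
    constructor
    apply coprod.hom_ext
    · simp only [coprod.inl_desc_assoc, Category.id_comp, Category.assoc]
      exact hI0D.symm
    · simp only [coprod.inr_desc_assoc, Category.assoc]
      rw [hfacJ, reassoc_of% hT2, IsPullback.lift_fst]
  obtain ⟨⟨⟨D', hD'1, hD'2⟩⟩⟩ :=
    (M.lift_of_trivFib _ qX hcccof hfqX hwqX).sq_hasLift sqD'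
  have hI0D' : coprod.inl ≫ pushout.inl (coprod.map J J) cW ≫ c₁ ≫ D' = 𝟙 QX := by
    have h := congrArg (fun t => (coprod.inl : QX ⟶ QX ⨿ QX) ≫ t) hD'1
    simpa [coprod.inl_desc, coprod.inl_desc_assoc, coprod.inr_desc, coprod.inr_desc_assoc] using h
  have hI1D' : coprod.inr ≫ pushout.inl (coprod.map J J) cW ≫ c₁ ≫ D' = T ≫ J := by
    have h := congrArg (fun t => (coprod.inr : QX ⟶ QX ⨿ QX) ≫ t) hD'1
    simpa [coprod.inl_desc, coprod.inl_desc_assoc, coprod.inr_desc, coprod.inr_desc_assoc] using h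
  have hD'weq : M.weq D' := by
    refine M.weq_cancel_left (coprod.inl ≫ pushout.inl (coprod.map J J) cW ≫ c₁) D'
      hI0weq ?_
    rw [show (coprod.inl ≫ pushout.inl (coprod.map J J) cW ≫ c₁) ≫ D' =
      coprod.inl ≫ pushout.inl (coprod.map J J) cW ≫ c₁ ≫ D' by simp only [Category.assoc]]
    rw [hI0D']
    exact weq_id M _
  have hTJweq : M.weq (T ≫ J) := by
    have h := M.weq_comp (coprod.inr ≫ pushout.inl (coprod.map J J) cW ≫ c₁) D'
      hI1weq hD'weq
    rw [show (coprod.inr ≫ pushout.inl (coprod.map J J) cW ≫ c₁) ≫ D' =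
      coprod.inr ≫ pushout.inl (coprod.map J J) cW ≫ c₁ ≫ D' by simp only [Category.assoc]]
      at h
    rw [hI1D'] at h
    exact h
  -- `J` is a retract of `T ≫ J`, hence a weak equivalence
  have hJweq : M.weq J := by
    refine retract_aux M.weq_retract (f := J) (g := T ≫ J) J (𝟙 QX) T (𝟙 QX)
      ?_ (by simp) hT1 (by simp) hTJweq
    rw [← Category.assoc, hT1]
    simp
  -- conclude
  have h1 : M.weq (qW ≫ j) := by
    rw [← hfacJ]
    exact M.weq_comp _ _ hJweq hwqX
  exact M.weq_cancel_left qW j hwqW h1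

end RightProperAux

open RightProperAux in
/-- A model category in which every object is fibrant is right proper: in any pullback
square, the base change of a weak equivalence along a fibration is a weak equivalence;
i.e. if `p : X ⟶ Z` is a fibration and `f : Y ⟶ Z` is a weak equivalence then the
projection `W ⟶ X` from the pullback `W = X ×_Z Y` is a weak equivalence. -/
theorem right_proper_of_all_objects_fibrant
    {C : Type u} [Category.{v} C] [HasLimits C] [HasColimits C]
    (M : ModelStructure C)
    (hfib : ∀ X : C, M.fib (terminal.from X))
    {W X Y Z : C} (fst : W ⟶ X) (snd : W ⟶ Y) (p : X ⟶ Z) (f : Y ⟶ Z)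
    (sq : IsPullback fst snd p f) (hp : M.fib p) (hf : M.weq f) :
    M.weq fst := by
  obtain ⟨Ym, i, q, hci, hwi, hfq, hfac⟩ := M.factor_trivCof_fib f
  have hwq : M.weq q := M.weq_cancel_left i q hwi (by rw [hfac]; exact hf)
  have pb := IsPullback.of_hasPullback p q
  have hsnd : M.fib (pullback.snd p q) := fib_of_isPullback M pb hp
  have hfstw : M.weq (pullback.fst p q) := (trivFib_of_isPullback M pb.flip hfq hwq).2
  have hω : fst ≫ p = (snd ≫ i) ≫ q := by
    rw [sq.w, ← hfac]
    simp only [Category.assoc]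
  have hω1 : pb.lift fst (snd ≫ i) hω ≫ pullback.fst p q = fst := pb.lift_fst _ _ _
  have hω2 : pb.lift fst (snd ≫ i) hω ≫ pullback.snd p q = snd ≫ i := pb.lift_snd _ _ _
  have sqUp : IsPullback (pb.lift fst (snd ≫ i) hω) snd (pullback.snd p q) i := by
    refine IsPullback.of_right ?_ hω2 pb
    rw [hω1, hfac]
    exact sq
  have hweqω := crux M hfib hci hwi hsnd sqUp
  rw [← hω1]
  exact M.weq_comp _ _ hweqω hfstw
end
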